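/- arXiv:1406.5826 — 3 statements merged into one kernel-verified Lean document; each statement's English description precedes it below -/
import Mathlib

section
/- For positive real numbers r_1, ..., r_s, the cyclic product r_1^{r_2} · r_2^{r_3} ⋯ r_{s-1}^{r_s} · r_s^{r_1} is at most r_1^{r_1} · r_2^{r_2} ⋯ r_s^{r_s}. -/
open Real

/-- Taking logarithms, this is the rearrangement inequality for the similarly ordered
sequences `log r` and `r`. -/
theorem prod_rpow_perm_le_prod_rpow_self {ι : Type*} [Fintype ι] (σ : Equiv.Perm ι) (r : ι → ℝ)
    (hr : ∀ i, 0 < r i) : ∏ i, r i ^ r (σ i) ≤ ∏ i, r i ^ r i := by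
  have hmono : Monovary (fun i => log (r i)) r := fun i j h => log_le_log (hr i) h.le
  calc ∏ i, r i ^ r (σ i) = exp (∑ i, log (r i) • r (σ i)) := by
        simp only [rpow_def_of_pos (hr _), exp_sum, smul_eq_mul]
    _ ≤ exp (∑ i, log (r i) • r i) := exp_le_exp.mpr hmono.sum_smul_comp_perm_le_sum_smul
    _ = ∏ i, r i ^ r i := by
        simp only [rpow_def_of_pos (hr _), exp_sum, smul_eq_mul]

theorem cyclic_prod_rpow_le_general (s : ℕ) (r : Fin s → ℝ) (hr : ∀ i, 0 < r i) :
    ∏ i : Fin s, r i ^ (r (finRotate s i)) ≤ ∏ i : Fin s, r i ^ (r i) :=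
  prod_rpow_perm_le_prod_rpow_self (finRotate s) r hr

/-- The cyclic product `r_1^{r_2} ⋯ r_{s-1}^{r_s} · r_s^{r_1}` is at most
`r_1^{r_1} ⋯ r_s^{r_s}`, for positive reals `r_i`. (Here `finRotate s` sends `i` to
`i+1` cyclically, so the factor at `i` is `r_i ^ r_{i+1}`.) -/
theorem cyclic_prod_rpow_le (s : ℕ) (hs : 0 < s) (r : Fin s → ℝ) (hr : ∀ i, 0 < r i) :
    ∏ i : Fin s, r i ^ (r (finRotate s i)) ≤ ∏ i : Fin s, r i ^ (r i) :=
  cyclic_prod_rpow_le_general s r hr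
end

section
/- The number of distinct matrices in GL(n,q) expressible as a product of at most k elementary matrices is at most q^{(k+2n)·log_q n + (3k+n)·log_q 2 + n + k + k·log_q e}. -/
open Matrix

/-- Permutation matrix of the transposition (i j). -/
def Pswap {F : Type*} [Field F] {n : ℕ} (i j : Fin n) :
    Matrix (Fin n) (Fin n) F :=
  (Equiv.swap i j).permMatrix F

/-- Row scaling elementary matrix: identity with (i,i) entry replaced by c. -/
def Escale {F : Type*} [Field F] {n : ℕ} (i : Fin n) (c : F) :
    Matrix (Fin n) (Fin n) F :=
  Matrix.diagonal (fun t => if t = i then c else 1)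

/-- Transvection adding `c` times row `i` to row `j` (entry `c` at position (j,i)). -/
def Eadd {F : Type*} [Field F] {n : ℕ} (i j : Fin n) (c : F) :
    Matrix (Fin n) (Fin n) F :=
  1 + Matrix.single j i c

/-- A matrix is elementary if it is a transposition matrix, a nonzero row scaling,
or a transvection. -/
def IsElementary {F : Type*} [Field F] {n : ℕ} (A : Matrix (Fin n) (Fin n) F) : Prop :=
  (∃ i j : Fin n, i ≠ j ∧ A = Pswap i j) ∨
  (∃ (i : Fin n) (c : F), c ≠ 0 ∧ A = Escale i c) ∨
  (∃ (i j : Fin n) (c : F), i ≠ j ∧ c ≠ 0 ∧ A = Eadd i j c)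

/-! Each elementary matrix is a transvection `1 + c E_ab` or a monomial matrix `P_σ · diag d`,
and conjugating a transvection by a monomial matrix gives a transvection. Pushing the monomial
factors to the right, a product of `k` elementary matrices becomes a product of at most `k`
transvections times one of at most `n! q^n` monomial matrices.

Say `(a, b, c)` and `(a', b', c')` are dependent if `b = a'` or `b' = a`; independent
transvections commute, and each letter has at most `2nq` dependents. Any word of transvections
can be rearranged, without changing its product, into levels of pairwise independent letters,
each letter depending on some letter of the previous level (a Cartier–Foata normal form); the
identity letters `(i, i, 0)` serve as a level before the first. Since a level is determined by
its multiset of letters, after a level of size `m` there are at most `C(2mnq + j, j)` choices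
for a level of size `j`, and induction on the length bounds the number of products of at most
`k` transvections by `2^n (16nq)^k`. -/

theorem Finset.card_sym {α : Type*} [DecidableEq α] (s : Finset α) (n : ℕ) :
    (s.sym n).card = (s.card + n - 1).choose n := by
  conv_lhs => rw [← s.attach_map_val, Finset.sym_map, Finset.card_map, Finset.attach_eq_univ,
    Finset.sym_univ, Finset.card_univ, Sym.card_sym_eq_choose, Fintype.card_coe]

theorem Nat.choose_mul_add_le {a : ℕ} (ha : 1 ≤ a) (c : ℕ) :
    ∀ j, (a * c + j).choose j ≤ a ^ j * (c + j).choose j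
  | 0 => by simp
  | j + 1 => by
    have ih := Nat.choose_mul_add_le ha c j
    have key : (a * c + j + 1).choose (j + 1) * (j + 1) ≤
        a ^ (j + 1) * (c + j + 1).choose (j + 1) * (j + 1) := by
      rw [← Nat.add_one_mul_choose_eq, mul_assoc, ← Nat.add_one_mul_choose_eq]
      calc (a * c + j + 1) * (a * c + j).choose j
          ≤ (a * (c + j + 1)) * (a ^ j * (c + j).choose j) := by gcongr; nlinarith
        _ = a ^ (j + 1) * ((c + j + 1) * (c + j).choose j) := by ring
    simpa [← add_assoc] using Nat.le_of_mul_le_mul_right key (Nat.succ_pos j)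

open Finset in
theorem one_add_sum_choose_mul_le (m D b : ℕ) (hD : 0 < D) :
    1 + ∑ j ∈ range b, (m * D + j).choose (j + 1) * (2 ^ (j + 1) * (8 * D) ^ (b - (j + 1)))
      ≤ 2 ^ m * (8 * D) ^ b := by
  -- each term is at most `2^m (4D)^(j+1) (8D)^(b-1-j)`, a geometric sequence of ratio `1/2`
  have hterm : ∀ j, (m * D + j).choose (j + 1) * (2 ^ (j + 1) * (8 * D) ^ (b - (j + 1)))
      ≤ 2 ^ m * (4 * D) * ((4 * D) ^ j * (8 * D) ^ (b - 1 - j)) := by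
    intro j
    have hchoose : (m * D + j).choose (j + 1) ≤ D ^ (j + 1) * 2 ^ (m + (j + 1)) :=
      calc (m * D + j).choose (j + 1) ≤ (D * m + (j + 1)).choose (j + 1) :=
            Nat.choose_le_choose _ (by rw [mul_comm]; omega)
        _ ≤ D ^ (j + 1) * (m + (j + 1)).choose (j + 1) := Nat.choose_mul_add_le hD m _
        _ ≤ D ^ (j + 1) * 2 ^ (m + (j + 1)) := by gcongr; exact Nat.choose_le_two_pow _ _
    calc _ ≤ D ^ (j + 1) * 2 ^ (m + (j + 1)) * (2 ^ (j + 1) * (8 * D) ^ (b - (j + 1))) := by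
          gcongr
      _ = _ := by
        rw [Nat.sub_sub, add_comm 1 j, mul_pow 4 D j,
          show (4 : ℕ) ^ j = 2 ^ j * 2 ^ j by rw [← mul_pow]; rfl]
        ring
  have hgeom : (∑ j ∈ range b, (4 * D) ^ j * (8 * D) ^ (b - 1 - j)) * (4 * D) + (4 * D) ^ b
      = (8 * D) ^ b := by
    rw [geom_sum₂_comm, show 8 * D = 4 * D + 4 * D by ring, geom_sum₂_mul_add]
  set G := ∑ j ∈ range b, (4 * D) ^ j * (8 * D) ^ (b - 1 - j)
  have hone : 1 ≤ 2 ^ m * (4 * D) ^ b := Nat.one_le_iff_ne_zero.2 (by positivity)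
  calc _ ≤ 1 + 2 ^ m * (4 * D) * G := by
        rw [mul_sum]; gcongr 1 + ?_; exact sum_le_sum fun j _ => hterm j
    _ ≤ 2 ^ m * (4 * D) ^ b + 2 ^ m * (4 * D) * G := Nat.add_le_add_right hone _
    _ = 2 ^ m * (8 * D) ^ b := by rw [← hgeom]; ring

lemma Set.ncard_range_le {α β : Type*} [Finite α] (g : α → β) :
    (Set.range g).ncard ≤ Nat.card α := by
  rw [← Set.image_univ]
  exact (Set.ncard_image_le Set.finite_univ).trans (Set.ncard_univ α).le

section Layering

variable {α M : Type*} [Monoid M] (f : α → M) (Dep : α → α → Prop)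

/- The levels of `L` are listed first to last; `P` plays the role of the level before the
first one. -/
def IsLayering : Multiset α → List (List α) → Prop
  | _, [] => True
  | P, lv :: L => lv ≠ [] ∧ lv.Pairwise (fun x y => ¬ Dep x y) ∧ (∀ y ∈ lv, ∃ x ∈ P, Dep x y) ∧
      IsLayering lv L

def layeredProds (P : Multiset α) (b : ℕ) : Set M :=
  {m | ∃ L, IsLayering Dep P L ∧ L.flatten.length ≤ b ∧ (L.flatten.map f).prod = m}

def consFirstLevel (x : α) : List (List α) → List (List α)
  | [] => [[x]]
  | lv :: L => (x :: lv) :: L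

/- `Multiset.toList` picks an arbitrary order; by `levelProd_coe` it does not matter on a level. -/
noncomputable def levelProd (s : Multiset α) : M := (s.toList.map f).prod

variable {f Dep}

@[simp]
lemma flatten_consFirstLevel (x : α) (L : List (List α)) :
    (consFirstLevel x L).flatten = x :: L.flatten := by
  cases L <;> rfl

lemma IsLayering.mono {P Q : Multiset α} (hPQ : ∀ x ∈ P, x ∈ Q) :
    ∀ {L : List (List α)}, IsLayering Dep P L → IsLayering Dep Q L
  | [], _ => trivial
  | _ :: _, ⟨hne, hpw, hdep, hL⟩ =>
    ⟨hne, hpw, fun y hy => (hdep y hy).imp fun x hx => ⟨hPQ x hx.1, hx.2⟩, hL⟩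

lemma isLayering_consFirstLevel [Std.Symm Dep] {P : Multiset α} {L : List (List α)} {x : α}
    (hL : IsLayering Dep P L) (hxP : ∃ p ∈ P, Dep p x) (hxL : ∀ y ∈ L.flatten, ¬ Dep y x) :
    IsLayering Dep P (consFirstLevel x L) := by
  cases L with
  | nil => exact ⟨List.cons_ne_nil _ _, List.pairwise_singleton _ _, by simpa using hxP, trivial⟩
  | cons lv L =>
    obtain ⟨-, hpw, hdep, hL⟩ := hL
    refine ⟨List.cons_ne_nil _ _, ?_, List.forall_mem_cons.2 ⟨hxP, hdep⟩,
      hL.mono fun y hy => by simpa using Or.inr hy⟩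
    exact List.pairwise_cons.2
      ⟨fun y hy h => hxL y (List.mem_flatten_of_mem List.mem_cons_self hy) (symm h), hpw⟩

lemma prod_consFirstLevel (hcomm : ∀ x y, ¬ Dep x y → Commute (f x) (f y)) {x : α}
    {L : List (List α)} (hxL : ∀ y ∈ L.flatten, ¬ Dep y x) :
    ((consFirstLevel x L).flatten.map f).prod = (L.flatten.map f).prod * f x := by
  rw [flatten_consFirstLevel, List.map_cons, List.prod_cons]
  refine (Commute.list_prod_right _ _ fun m hm => ?_).eq
  obtain ⟨y, hy, rfl⟩ := List.mem_map.1 hm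
  exact (hcomm y x (hxL y hy)).symm

/- A new last letter `x` joins the level right after the last level containing a letter it
depends on. -/
lemma IsLayering.exists_append [Std.Symm Dep]
    (hcomm : ∀ x y, ¬ Dep x y → Commute (f x) (f y)) {x : α} :
    ∀ {P : Multiset α} {L : List (List α)}, IsLayering Dep P L →
      ((∃ p ∈ P, Dep p x) ∨ ∃ y ∈ L.flatten, Dep y x) →
      ∃ L', IsLayering Dep P L' ∧ L'.flatten.length = L.flatten.length + 1 ∧
        (L'.flatten.map f).prod = (L.flatten.map f).prod * f x
  | _, [], hL, hx => by
    obtain hxP | ⟨y, hy, -⟩ := hx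
    · exact ⟨[[x]], isLayering_consFirstLevel hL hxP (by simp), rfl, by simp⟩
    · simp at hy
  | P, lv :: L, ⟨hne, hpw, hdep, hL⟩, hx => by
    by_cases hxL : ∃ y ∈ L.flatten, Dep y x
    · obtain ⟨L', hL', hlen, hprod⟩ := hL.exists_append hcomm (Or.inr hxL)
      refine ⟨lv :: L', ⟨hne, hpw, hdep, hL'⟩, by simp [hlen]; omega, ?_⟩
      simp only [List.flatten_cons, List.map_append, List.prod_append, hprod, mul_assoc]
    simp only [not_exists, not_and] at hxL
    by_cases hxlv : ∃ y ∈ lv, Dep y x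
    · refine ⟨lv :: consFirstLevel x L,
        ⟨hne, hpw, hdep, isLayering_consFirstLevel hL hxlv hxL⟩, by simp; omega, ?_⟩
      simp only [List.flatten_cons, List.map_append, List.prod_append,
        prod_consFirstLevel hcomm hxL, mul_assoc]
    simp only [not_exists, not_and] at hxlv
    have hxL' : ∀ y ∈ (lv :: L).flatten, ¬ Dep y x := by
      simpa [or_imp, forall_and] using
        ⟨hxlv, fun y l hl hy => hxL y (List.mem_flatten_of_mem hl hy)⟩
    have hxP : ∃ p ∈ P, Dep p x := hx.resolve_right (by simpa using hxL')
    exact ⟨consFirstLevel x (lv :: L),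
      isLayering_consFirstLevel ⟨hne, hpw, hdep, hL⟩ hxP hxL', by simp,
      prod_consFirstLevel hcomm hxL'⟩

theorem exists_isLayering [Std.Symm Dep] (hcomm : ∀ x y, ¬ Dep x y → Commute (f x) (f y))
    {P : Multiset α} (hP : ∀ y, ∃ x ∈ P, Dep x y) (w : List α) :
    ∃ L, IsLayering Dep P L ∧ L.flatten.length = w.length ∧
      (L.flatten.map f).prod = (w.map f).prod := by
  induction w using List.reverseRecOn with
  | nil => exact ⟨[], trivial, rfl, rfl⟩
  | append_singleton w x ih =>
    obtain ⟨L, hL, hlen, hprod⟩ := ih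
    obtain ⟨L', hL', hlen', hprod'⟩ := hL.exists_append hcomm (Or.inl (hP x))
    refine ⟨L', hL', by simp [hlen', hlen], ?_⟩
    rw [hprod', hprod, List.map_append, List.prod_append, List.map_singleton, List.prod_singleton]

lemma levelProd_coe (hcomm : ∀ x y, ¬ Dep x y → Commute (f x) (f y)) {lv : List α}
    (hlv : lv.Pairwise (fun x y => ¬ Dep x y)) : levelProd f (lv : Multiset α) = (lv.map f).prod :=
  have hperm : (lv : Multiset α).toList.Perm lv := Multiset.coe_eq_coe.1 (Multiset.coe_toList _)
  ((hperm.map f).symm.prod_eq' (List.pairwise_map.2 (hlv.imp (hcomm _ _)))).symm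

lemma finite_layeredProds [Finite α] (P : Multiset α) (b : ℕ) :
    (layeredProds f Dep P b).Finite :=
  ((List.finite_length_le α b).image fun w => (w.map f).prod).subset
    fun _ ⟨L, _, hlen, hprod⟩ => ⟨L.flatten, hlen, hprod⟩

lemma ncard_setOf_exists_dep_le {D : ℕ} (hD : ∀ x, {y | Dep x y}.ncard ≤ D) (P : Multiset α) :
    {y | ∃ x ∈ P, Dep x y}.ncard ≤ Multiset.card P * D := by
  induction P using Multiset.induction_on with
  | empty => simp
  | cons a P ih =>
    have hunion : {y | ∃ x ∈ a ::ₘ P, Dep x y} = {y | Dep a y} ∪ {y | ∃ x ∈ P, Dep x y} := by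
      ext y
      simp
    rw [hunion, Multiset.card_cons, add_one_mul, add_comm]
    exact (Set.ncard_union_le _ _).trans (add_le_add (hD a) ih)

lemma layeredProds_subset [DecidableEq α] (hcomm : ∀ x y, ¬ Dep x y → Commute (f x) (f y))
    {P : Multiset α} {S : Finset α} (hS : ∀ y, (∃ x ∈ P, Dep x y) → y ∈ S) (b : ℕ) :
    layeredProds f Dep P b ⊆ {1} ∪ ⋃ j ∈ Finset.range b, ⋃ s ∈ S.sym (j + 1),
      (levelProd f s * ·) '' layeredProds f Dep (s : Multiset α) (b - (j + 1)) := by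
  rintro _ ⟨_ | ⟨lv, L⟩, hL, hlen, rfl⟩
  · simp
  obtain ⟨hne, hpw, hdep, hL⟩ := hL
  have hlv : lv.length = lv.length - 1 + 1 :=
    (Nat.succ_pred_eq_of_pos (List.length_pos_iff.2 hne)).symm
  simp only [List.flatten_cons, List.length_append] at hlen
  simp only [Set.mem_union, Set.mem_iUnion, Finset.mem_range, Finset.mem_sym_iff]
  refine Or.inr ⟨lv.length - 1, by omega, ⟨lv, hlv ▸ rfl⟩, fun y hy => hS y (hdep y hy), _,
    ⟨L, hL, by omega, rfl⟩, ?_⟩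
  simp only [List.flatten_cons, List.map_append, List.prod_append]
  exact congrArg (· * _) (levelProd_coe hcomm hpw)

theorem ncard_layeredProds_le [Fintype α] (hcomm : ∀ x y, ¬ Dep x y → Commute (f x) (f y))
    {D : ℕ} (hD0 : 0 < D) (hD : ∀ x, {y | Dep x y}.ncard ≤ D) (b : ℕ) (P : Multiset α) :
    (layeredProds f Dep P b).ncard ≤ 2 ^ Multiset.card P * (8 * D) ^ b := by
  classical
  induction b using Nat.strong_induction_on generalizing P with
  | _ b ih =>
  set S := (Set.toFinite {y | ∃ x ∈ P, Dep x y}).toFinset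
  have hS : S.card ≤ Multiset.card P * D :=
    (Set.ncard_eq_toFinset_card _ _).symm.trans_le (ncard_setOf_exists_dep_le hD P)
  set U := ⋃ j ∈ Finset.range b, ⋃ s ∈ S.sym (j + 1),
    (levelProd f s * ·) '' layeredProds f Dep (s : Multiset α) (b - (j + 1))
  have hU : U.Finite := (Finset.range b).finite_toSet.biUnion fun j _ =>
    (S.sym (j + 1)).finite_toSet.biUnion fun s _ => (finite_layeredProds _ _).image _
  calc (layeredProds f Dep P b).ncard ≤ ({1} : Set M).ncard + U.ncard :=
        (Set.ncard_le_ncard (layeredProds_subset hcomm (by simp [S]) b)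
          ((Set.finite_singleton 1).union hU)).trans (Set.ncard_union_le _ _)
    _ ≤ 1 + ∑ j ∈ Finset.range b, ∑ s ∈ S.sym (j + 1),
          ((levelProd f s * ·) '' layeredProds f Dep (s : Multiset α) (b - (j + 1))).ncard := by
        rw [Set.ncard_singleton]
        gcongr 1 + ?_
        exact (Finset.set_ncard_biUnion_le _ _).trans
          (Finset.sum_le_sum fun j _ => Finset.set_ncard_biUnion_le _ _)
    _ ≤ 1 + ∑ j ∈ Finset.range b, ∑ s ∈ S.sym (j + 1), 2 ^ (j + 1) * (8 * D) ^ (b - (j + 1)) := by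
        gcongr 1 + ∑ j ∈ _, ∑ s ∈ _, ?_ with j hj s
        refine (Set.ncard_image_le (finite_layeredProds _ _)).trans ?_
        simpa using ih (b - (j + 1)) (by simp at hj; omega) s
    _ ≤ 1 + ∑ j ∈ Finset.range b,
          (Multiset.card P * D + j).choose (j + 1) * (2 ^ (j + 1) * (8 * D) ^ (b - (j + 1))) := by
        simp only [Finset.sum_const, Finset.card_sym, smul_eq_mul]
        gcongr
        omega
    _ ≤ 2 ^ Multiset.card P * (8 * D) ^ b := one_add_sum_choose_mul_le _ _ _ hD0

theorem ncard_setOf_prod_le [Fintype α] [Std.Symm Dep]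
    (hcomm : ∀ x y, ¬ Dep x y → Commute (f x) (f y)) {D : ℕ} (hD0 : 0 < D)
    (hD : ∀ x, {y | Dep x y}.ncard ≤ D) {P : Multiset α} (hP : ∀ y, ∃ x ∈ P, Dep x y) (b : ℕ) :
    {m | ∃ w : List α, w.length ≤ b ∧ (w.map f).prod = m}.ncard
      ≤ 2 ^ Multiset.card P * (8 * D) ^ b := by
  refine (Set.ncard_le_ncard ?_ (finite_layeredProds P b)).trans
    (ncard_layeredProds_le hcomm hD0 hD b P)
  rintro _ ⟨w, hw, rfl⟩
  obtain ⟨L, hL, hlen, hprod⟩ := exists_isLayering hcomm hP w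
  exact ⟨L, hL, hlen ▸ hw, hprod⟩

end Layering

namespace Matrix

section Monomial

variable {ι R : Type*} [Fintype ι] [DecidableEq ι] [Semiring R]

lemma permMatrix_mul_eq_submatrix (σ : Equiv.Perm ι) (M : Matrix ι ι R) :
    σ.permMatrix R * M = M.submatrix σ id :=
  PEquiv.toMatrix_toPEquiv_mul σ M

lemma mul_permMatrix_eq_submatrix (σ : Equiv.Perm ι) (M : Matrix ι ι R) :
    M * σ.permMatrix R = M.submatrix id σ.symm :=
  PEquiv.mul_toMatrix_toPEquiv M σ

lemma diagonal_mul_permMatrix (d : ι → R) (σ : Equiv.Perm ι) :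
    diagonal d * σ.permMatrix R = σ.permMatrix R * diagonal (d ∘ σ.symm) := by
  rw [permMatrix_mul_eq_submatrix, mul_permMatrix_eq_submatrix]
  ext i j
  rcases eq_or_ne (σ i) j with rfl | h
  · simp
  · have : i ≠ σ.symm j := fun e => h (by simp [e])
    simp [diagonal_apply_ne _ this, diagonal_apply_ne _ h]

lemma diagonal_mul_single (d : ι → R) (a b : ι) (c : R) :
    diagonal d * single a b c = single a b (d a * c) := by
  ext i j
  by_cases h : a = i <;> simp [single_apply, h]

lemma single_mul_diagonal (d : ι → R) (a b : ι) (c : R) :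
    single a b c * diagonal d = single a b (c * d b) := by
  ext i j
  by_cases h : b = j <;> simp [single_apply, h]

variable (ι R) in
def monomialMatrices : Set (Matrix ι ι R) :=
  Set.range fun p : Equiv.Perm ι × (ι → Rˣ) => p.1.permMatrix R * diagonal fun i => (p.2 i : R)

lemma one_mem_monomialMatrices : (1 : Matrix ι ι R) ∈ monomialMatrices ι R :=
  ⟨(1, 1), by simp⟩

lemma mul_mem_monomialMatrices {Q Q' : Matrix ι ι R} (hQ : Q ∈ monomialMatrices ι R)
    (hQ' : Q' ∈ monomialMatrices ι R) : Q * Q' ∈ monomialMatrices ι R := by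
  obtain ⟨⟨σ, d⟩, rfl⟩ := hQ
  obtain ⟨⟨τ, e⟩, rfl⟩ := hQ'
  refine ⟨(τ * σ, fun i => d (τ.symm i) * e i), Eq.symm ?_⟩
  calc σ.permMatrix R * diagonal (fun i => (d i : R)) *
        (τ.permMatrix R * diagonal fun i => (e i : R))
      = σ.permMatrix R * (diagonal (fun i => (d i : R)) * τ.permMatrix R) *
          diagonal (fun i => (e i : R)) := by simp only [mul_assoc]
    _ = (τ * σ).permMatrix R * diagonal fun i => (d (τ.symm i) * e i : R) := by
        rw [diagonal_mul_permMatrix, permMatrix_mul, mul_assoc, mul_assoc, diagonal_mul_diagonal,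
          ← mul_assoc]
        rfl

lemma ncard_monomialMatrices_le [Fintype R] :
    (monomialMatrices ι R).ncard
      ≤ (Fintype.card ι).factorial * Fintype.card R ^ Fintype.card ι := by
  refine (Set.ncard_range_le _).trans ?_
  rw [Nat.card_prod, Nat.card_fun, Nat.card_perm, ← Nat.card_eq_fintype_card,
    ← Nat.card_eq_fintype_card (α := R)]
  gcongr
  exact Nat.card_le_card_of_injective _ Units.val_injective

end Monomial

section TransvectionLetters

variable {ι R : Type*}

def transvectionOfTriple [DecidableEq ι] [CommRing R] (x : ι × ι × R) : Matrix ι ι R :=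
  transvection x.1 x.2.1 x.2.2

def TransvectionDep (x y : ι × ι × R) : Prop := x.2.1 = y.1 ∨ y.2.1 = x.1

instance : Std.Symm (TransvectionDep (ι := ι) (R := R)) := ⟨fun _ _ h => h.symm⟩

lemma commute_transvectionOfTriple [Fintype ι] [DecidableEq ι] [CommRing R] {x y : ι × ι × R}
    (h : ¬ TransvectionDep x y) : Commute (transvectionOfTriple x) (transvectionOfTriple y) := by
  obtain ⟨hxy, hyx⟩ := not_or.1 h
  simp only [Commute, SemiconjBy, transvectionOfTriple, transvection, mul_add, add_mul, mul_one,
    one_mul, single_mul_single_of_ne _ _ _ _ hxy, single_mul_single_of_ne _ _ _ _ hyx, add_zero]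
  abel

lemma ncard_transvectionDep_le [Fintype ι] [Fintype R] (x : ι × ι × R) :
    {y | TransvectionDep x y}.ncard ≤ 2 * (Fintype.card ι * Fintype.card R) := by
  have hsub : {y | TransvectionDep x y} ⊆ Set.range (fun p : ι × R => (x.2.1, p)) ∪
      Set.range (fun p : ι × R => (p.1, x.1, p.2)) := by
    rintro ⟨a, b, c⟩ (h | h)
    · exact Or.inl ⟨(b, c), by simp_all⟩
    · exact Or.inr ⟨(a, c), by simp_all⟩
  calc _ ≤ _ := Set.ncard_le_ncard hsub (Set.toFinite _)
    _ ≤ _ := Set.ncard_union_le _ _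
    _ ≤ Nat.card (ι × R) + Nat.card (ι × R) :=
        add_le_add (Set.ncard_range_le _) (Set.ncard_range_le _)
    _ = 2 * (Fintype.card ι * Fintype.card R) := by simp [Nat.card_eq_fintype_card]; ring

theorem ncard_setOf_prod_transvectionOfTriple_le [Fintype ι] [DecidableEq ι] [Nonempty ι]
    [CommRing R] [Fintype R] (k : ℕ) :
    {M | ∃ t : List (ι × ι × R), t.length ≤ k ∧ (t.map transvectionOfTriple).prod = M}.ncard
      ≤ 2 ^ Fintype.card ι * (16 * (Fintype.card ι * Fintype.card R)) ^ k := by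
  have hroot : ∀ y : ι × ι × R,
      ∃ x ∈ Finset.univ.val.map fun i => (i, i, (0 : R)), TransvectionDep x y :=
    fun y => ⟨(y.1, y.1, 0), by simp, Or.inl rfl⟩
  have hD0 : 0 < 2 * (Fintype.card ι * Fintype.card R) := by
    have := Fintype.card_pos (α := ι)
    have := Fintype.card_pos (α := R)
    positivity
  simpa [← mul_assoc] using ncard_setOf_prod_le (fun _ _ => commute_transvectionOfTriple) hD0
    ncard_transvectionDep_le hroot k

lemma exists_mul_transvectionOfTriple_eq [Fintype ι] [DecidableEq ι] [CommRing R]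
    {Q : Matrix ι ι R} (hQ : Q ∈ monomialMatrices ι R) (x : ι × ι × R) :
    ∃ y, Q * transvectionOfTriple x = transvectionOfTriple y * Q := by
  obtain ⟨⟨σ, d⟩, rfl⟩ := hQ
  obtain ⟨a, b, c⟩ := x
  refine ⟨(σ.symm a, σ.symm b, d a * c * (d b)⁻¹), ?_⟩
  have hQs : σ.permMatrix R * diagonal (fun i => (d i : R)) * single a b c
      = single (σ.symm a) b (d a * c) := by
    rw [mul_assoc, diagonal_mul_single, permMatrix_mul_eq_submatrix]
    exact submatrix_single_equiv σ (Equiv.refl _) _ _ _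
  have hsQ : single (σ.symm a) (σ.symm b) (d a * c * (d b)⁻¹ : R)
      * (σ.permMatrix R * diagonal (fun i => (d i : R))) = single (σ.symm a) b (d a * c) := by
    have h := submatrix_single_equiv (Equiv.refl ι) σ.symm (σ.symm a) (σ.symm b)
      (d a * c * (d b)⁻¹ : R)
    simp only [Equiv.coe_refl, Equiv.refl_symm, Equiv.refl_apply, Equiv.symm_symm,
      Equiv.apply_symm_apply] at h
    rw [← mul_assoc, mul_permMatrix_eq_submatrix, h, single_mul_diagonal]
    simp
  simp only [transvectionOfTriple, transvection, mul_add, add_mul, mul_one, one_mul, hQs, hsQ]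

lemma exists_mul_prod_transvectionOfTriple_eq [Fintype ι] [DecidableEq ι] [CommRing R]
    {Q : Matrix ι ι R} (hQ : Q ∈ monomialMatrices ι R) :
    ∀ t : List (ι × ι × R), ∃ t' : List (ι × ι × R), t'.length = t.length ∧
      Q * (t.map transvectionOfTriple).prod = (t'.map transvectionOfTriple).prod * Q
  | [] => ⟨[], rfl, by simp⟩
  | x :: t => by
    obtain ⟨y, hy⟩ := exists_mul_transvectionOfTriple_eq hQ x
    obtain ⟨t', hlen, ht'⟩ := exists_mul_prod_transvectionOfTriple_eq hQ t
    refine ⟨y :: t', by simp [hlen], ?_⟩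
    rw [List.map_cons, List.prod_cons, List.map_cons, List.prod_cons, ← mul_assoc, hy, mul_assoc,
      ht', mul_assoc]

end TransvectionLetters

end Matrix

section Elementary

variable {F : Type*} [Field F] {n : ℕ}

lemma IsElementary.mem_monomialMatrices_or {A : Matrix (Fin n) (Fin n) F} (hA : IsElementary A) :
    A ∈ monomialMatrices (Fin n) F ∨ ∃ x, A = transvectionOfTriple x := by
  rcases hA with ⟨i, j, -, rfl⟩ | ⟨i, c, hc, rfl⟩ | ⟨i, j, c, -, -, rfl⟩
  · exact Or.inl ⟨(Equiv.swap i j, 1), by simp [Pswap]⟩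
  · refine Or.inl ⟨(1, fun t => if t = i then Units.mk0 c hc else 1), ?_⟩
    simp only [permMatrix_one, one_mul, Escale]
    congr 1
    funext t
    split_ifs <;> simp
  · exact Or.inr ⟨(j, i, c), rfl⟩

theorem exists_prod_transvectionOfTriple_mul_monomial {l : List (Matrix (Fin n) (Fin n) F)}
    (hl : ∀ A ∈ l, IsElementary A) :
    ∃ t : List (Fin n × Fin n × F), t.length ≤ l.length ∧
      ∃ Q ∈ monomialMatrices (Fin n) F, (t.map transvectionOfTriple).prod * Q = l.prod := by
  induction l with
  | nil => exact ⟨[], le_rfl, 1, one_mem_monomialMatrices, by simp⟩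
  | cons A l ih =>
    obtain ⟨t, hlen, Q, hQ, hprod⟩ := ih fun B hB => hl B (List.mem_cons_of_mem _ hB)
    rcases (hl A List.mem_cons_self).mem_monomialMatrices_or with hA | ⟨x, rfl⟩
    · obtain ⟨t', hlen', ht'⟩ := exists_mul_prod_transvectionOfTriple_eq hA t
      refine ⟨t', by simp; omega, A * Q, mul_mem_monomialMatrices hA hQ, ?_⟩
      rw [List.prod_cons, ← hprod, ← mul_assoc A, ht', mul_assoc]
    · refine ⟨x :: t, by simpa using hlen, Q, hQ, ?_⟩
      rw [List.prod_cons, ← hprod, List.map_cons, List.prod_cons, mul_assoc]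

theorem ncard_setOf_prod_elementary_le [Fintype F] (hn : 0 < n) (k : ℕ) :
    {M : Matrix (Fin n) (Fin n) F | ∃ l : List (Matrix (Fin n) (Fin n) F),
        l.length ≤ k ∧ (∀ A ∈ l, IsElementary A) ∧ M = l.prod}.ncard
      ≤ 2 ^ n * (16 * (n * Fintype.card F)) ^ k * (n.factorial * Fintype.card F ^ n) := by
  have : NeZero n := ⟨hn.ne'⟩
  set T := {M | ∃ t : List (Fin n × Fin n × F), t.length ≤ k ∧
    (t.map transvectionOfTriple).prod = M}
  have hsub : {M : Matrix (Fin n) (Fin n) F | ∃ l : List (Matrix (Fin n) (Fin n) F),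
      l.length ≤ k ∧ (∀ A ∈ l, IsElementary A) ∧ M = l.prod}
        ⊆ (fun p => p.1 * p.2) '' (T ×ˢ monomialMatrices (Fin n) F) := by
    rintro _ ⟨l, hlen, hl, rfl⟩
    obtain ⟨t, ht, Q, hQ, hprod⟩ := exists_prod_transvectionOfTriple_mul_monomial hl
    exact ⟨(_, Q), ⟨⟨t, ht.trans hlen, rfl⟩, hQ⟩, hprod⟩
  calc _ ≤ _ := Set.ncard_le_ncard hsub
    _ ≤ (T ×ˢ monomialMatrices (Fin n) F).ncard := Set.ncard_image_le (Set.toFinite _)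
    _ = T.ncard * (monomialMatrices (Fin n) F).ncard := Set.ncard_prod
    _ ≤ _ := by
        simpa using Nat.mul_le_mul
          (ncard_setOf_prod_transvectionOfTriple_le (ι := Fin n) (R := F) k)
          (ncard_monomialMatrices_le (ι := Fin n) (R := F))

end Elementary

lemma Real.rpow_natCast_mul_logb {b x : ℝ} (hb0 : 0 < b) (hb1 : b ≠ 1) (hx : 0 < x) (m : ℕ) :
    b ^ ((m : ℝ) * Real.logb b x) = x ^ m := by
  rw [mul_comm, Real.rpow_mul hb0.le, Real.rpow_logb hb0 hb1 hx, Real.rpow_natCast]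

lemma rpow_exponent_eq_prod_pow {n : ℕ} (hn : 0 < n) (k : ℕ) {q : ℝ} (hq : 1 < q) :
    q ^ (((k : ℝ) + 2 * n) * Real.logb q n + (3 * (k : ℝ) + n) * Real.logb q 2
        + n + k + (k : ℝ) * Real.logb q (Real.exp 1))
      = (n : ℝ) ^ (k + 2 * n) * 2 ^ (3 * k + n) * q ^ (n + k) * Real.exp 1 ^ k := by
  have hq0 : 0 < q := by linarith
  have e1 := Real.rpow_natCast_mul_logb hq0 hq.ne' (Nat.cast_pos.2 hn) (k + 2 * n)
  have e2 := Real.rpow_natCast_mul_logb hq0 hq.ne' two_pos (3 * k + n)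
  have e3 := Real.rpow_natCast_mul_logb hq0 hq.ne' (Real.exp_pos 1) k
  push_cast at e1 e2
  rw [Real.rpow_add hq0, Real.rpow_add hq0, Real.rpow_add hq0, Real.rpow_add hq0, e1, e2, e3,
    Real.rpow_natCast, Real.rpow_natCast, pow_add q]
  ring

lemma two_pow_mul_pow_mul_factorial_le {n : ℕ} (hn : 0 < n) (k : ℕ) {q : ℝ} (hq : 0 ≤ q) :
    2 ^ n * (16 * (n * q)) ^ k * (n.factorial * q ^ n)
      ≤ (n : ℝ) ^ (k + 2 * n) * 2 ^ (3 * k + n) * q ^ (n + k) * Real.exp 1 ^ k := by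
  have hfac : (n.factorial : ℝ) ≤ n ^ (2 * n) := by
    exact_mod_cast n.factorial_le_pow.trans (Nat.pow_le_pow_right hn (by omega))
  have h16 : (16 : ℝ) ^ k ≤ 2 ^ (3 * k) * Real.exp 1 ^ k := by
    rw [pow_mul, ← mul_pow]
    gcongr
    linarith [Real.add_one_le_exp 1]
  calc _ = (16 : ℝ) ^ k * n.factorial * (2 ^ n * n ^ k * q ^ (n + k)) := by ring
    _ ≤ 2 ^ (3 * k) * Real.exp 1 ^ k * n ^ (2 * n) * (2 ^ n * n ^ k * q ^ (n + k)) := by gcongr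
    _ = _ := by ring

theorem card_short_products_le_general (n k q : ℕ) (hn : 0 < n)
    (F : Type*) [Field F] [Fintype F] (hF : Fintype.card F = q) :
    (Set.ncard {M : Matrix (Fin n) (Fin n) F |
        ∃ l : List (Matrix (Fin n) (Fin n) F),
          l.length ≤ k ∧ (∀ A ∈ l, IsElementary A) ∧ M = l.prod} : ℝ)
      ≤ (q : ℝ) ^ (((k : ℝ) + 2 * n) * Real.logb q n + (3 * (k : ℝ) + n) * Real.logb q 2
          + n + k + (k : ℝ) * Real.logb q (Real.exp 1)) := by
  subst hF
  have hq : (1 : ℝ) < Fintype.card F := by exact_mod_cast Fintype.one_lt_card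
  rw [rpow_exponent_eq_prod_pow hn k hq]
  calc _ ≤ ((2 ^ n * (16 * (n * Fintype.card F)) ^ k * (n.factorial * Fintype.card F ^ n) : ℕ)
          : ℝ) := by exact_mod_cast ncard_setOf_prod_elementary_le hn k
    _ ≤ _ := by
        push_cast
        exact two_pow_mul_pow_mul_factorial_le hn k (Nat.cast_nonneg _)

/-- The number of matrices expressible as a product of at most `k` elementary matrices
is at most `q^{(k+2n)·log_q n + (3k+n)·log_q 2 + n + k + k·log_q e}`. -/
theorem card_short_products_le (n k q : ℕ) (hn : 0 < n) (hk : 0 < k) (hq : IsPrimePow q)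
    (F : Type*) [Field F] [Fintype F] [DecidableEq F] (hF : Fintype.card F = q) :
    (Set.ncard {M : Matrix (Fin n) (Fin n) F |
        ∃ l : List (Matrix (Fin n) (Fin n) F),
          l.length ≤ k ∧ (∀ A ∈ l, IsElementary A) ∧ M = l.prod} : ℝ)
      ≤ (q : ℝ) ^ (((k : ℝ) + 2 * n) * Real.logb q n + (3 * (k : ℝ) + n) * Real.logb q 2
          + n + k + (k : ℝ) * Real.logb q (Real.exp 1)) :=
  card_short_products_le_general n k q hn F hF
end

section
/- Every product of elementary n×n matrices over a field F equals a product E_1⋯E_k (with k at most the original length) where first come transposition matrices, then row-scaling matrices E_i(λ) with strictly increasing indices i, and then transvections E_{ij}(λ). -/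
open Matrix

/-!
Sweep the product from right to left, keeping the part already processed in the form
`P * D * T`: `P` a product of transpositions, `D` diagonal, `T` a product of transvections.
A new transposition joins `P`. A scaling or a transvection passes to the right of the
permutation matrix `P` at the cost of relabelling its indices; a scaling is then absorbed
into `D`, changing at most one diagonal entry, and a transvection passes `D` at the cost of
rescaling its coefficient by a ratio of diagonal entries. Finally `D` is the product of the
scalings at its entries different from `1`, taken in increasing order.
-/
theorem Matrix.mul_permMatrix_eq_permMatrix_mul_submatrix {ι R : Type*} [Fintype ι]
    [DecidableEq ι] [NonAssocSemiring R] (σ : Equiv.Perm ι) (M : Matrix ι ι R) :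
    M * σ.permMatrix R = σ.permMatrix R * M.submatrix σ.symm σ.symm := by
  rw [Equiv.Perm.permMatrix, PEquiv.mul_toMatrix_toPEquiv, PEquiv.toMatrix_toPEquiv_mul,
    submatrix_submatrix]
  simp

theorem Matrix.single_mul_diagonal_s19 {ι R : Type*} [Fintype ι] [DecidableEq ι] [Semiring R]
    (i j : ι) (c : R) (d : ι → R) : single i j c * diagonal d = single i j (c * d j) := by
  ext x y
  rw [mul_diagonal]
  by_cases hx : i = x <;> by_cases hy : j = y <;> simp [single, hx, hy]

theorem Matrix.diagonal_mul_single_s19 {ι R : Type*} [Fintype ι] [DecidableEq ι] [Semiring R]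
    (i j : ι) (c : R) (d : ι → R) : diagonal d * single i j c = single i j (d i * c) := by
  ext x y
  rw [diagonal_mul]
  by_cases hx : i = x <;> by_cases hy : j = y <;> simp [single, hx, hy]

section

variable {F : Type*} [Field F] {n : ℕ}

theorem Escale_eq_diagonal_mulSingle (i : Fin n) (c : F) :
    Escale i c = diagonal (Pi.mulSingle i c) := by
  ext x y
  simp [Escale, Pi.mulSingle_apply, diagonal_apply]

theorem Escale_mul_permMatrix (σ : Equiv.Perm (Fin n)) (k : Fin n) (c : F) :
    Escale k c * σ.permMatrix F = σ.permMatrix F * Escale (σ k) c := by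
  rw [mul_permMatrix_eq_permMatrix_mul_submatrix, Escale_eq_diagonal_mulSingle,
    Escale_eq_diagonal_mulSingle, submatrix_diagonal_equiv]
  congr 2
  ext t
  simp [Pi.mulSingle_apply, Equiv.symm_apply_eq]

theorem Eadd_mul_permMatrix (σ : Equiv.Perm (Fin n)) (a b : Fin n) (c : F) :
    Eadd a b c * σ.permMatrix F = σ.permMatrix F * Eadd (σ a) (σ b) c := by
  rw [mul_permMatrix_eq_permMatrix_mul_submatrix]
  simp [Eadd, submatrix_add]

theorem Eadd_mul_diagonal (a b : Fin n) (c : F) {d : Fin n → F} (hd : d b ≠ 0) :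
    Eadd a b c * diagonal d = diagonal d * Eadd a b (c * d a / d b) := by
  rw [Eadd, Eadd, add_mul, mul_add, one_mul, mul_one, single_mul_diagonal_s19,
    diagonal_mul_single_s19, mul_div_cancel₀ _ hd]

theorem exists_prod_eq_permMatrix (l : List (Matrix (Fin n) (Fin n) F))
    (hl : ∀ A ∈ l, ∃ i j : Fin n, i ≠ j ∧ A = Pswap i j) :
    ∃ σ : Equiv.Perm (Fin n), l.prod = σ.permMatrix F := by
  induction l with
  | nil => exact ⟨1, by simp⟩
  | cons A l ih =>
    obtain ⟨i, j, -, rfl⟩ := hl A List.mem_cons_self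
    obtain ⟨σ, hσ⟩ := ih fun B hB => hl B (List.mem_cons_of_mem _ hB)
    exact ⟨σ * Equiv.swap i j, by rw [List.prod_cons, hσ, Matrix.permMatrix_mul, Pswap]⟩

theorem exists_strictMono_ofFn_Escale_prod_eq_diagonal {d : Fin n → F} (hd : ∀ t, d t ≠ 0) :
    ∃ (m : ℕ) (idx : Fin m → Fin n) (c : Fin m → F),
      StrictMono idx ∧ (∀ t, c t ≠ 0) ∧ m = (Function.mulSupport d).ncard ∧
      (List.ofFn fun t => Escale (idx t) (c t)).prod = diagonal d := by
  set s := (Function.mulSupport d).toFinite.toFinset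
  set idx := s.orderEmbOfFin rfl
  refine ⟨s.card, idx, d ∘ idx, idx.strictMono, fun t => hd _, ?_, ?_⟩
  · exact (Set.ncard_eq_toFinset_card _ _).symm
  have hlist : (List.ofFn fun t => Escale (idx t) ((d ∘ idx) t)) =
      (List.ofFn fun t => Pi.mulSingle (idx t) (d (idx t))).map (diagonalRingHom (Fin n) F) := by
    simp [List.map_ofFn, Function.comp_def, Escale_eq_diagonal_mulSingle]
  rw [hlist, ← map_list_prod, List.prod_ofFn, diagonalRingHom_apply]
  congr 1
  have hreindex : ∏ t, Pi.mulSingle (idx t) (d (idx t)) = ∏ x ∈ s, Pi.mulSingle x (d x) := by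
    rw [← Finset.prod_coe_sort s]
    exact Fintype.prod_equiv (s.orderIsoOfFin rfl).toEquiv _ _ fun t => rfl
  rw [hreindex]
  ext x
  rw [Finset.prod_apply]
  simp only [Pi.mulSingle_apply]
  rw [Finset.prod_ite_eq]
  split_ifs with hx
  · rfl
  · exact (by simpa [s] using hx : d x = 1).symm

/-- `M = P * diagonal d * T` with `P` a product of transpositions and `T` a product of
transvections, using at most `k` factors when the diagonal block counts as one scaling per
entry `d t ≠ 1`. -/
def HasCanonicalFactorization (M : Matrix (Fin n) (Fin n) F) (k : ℕ) : Prop :=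
  ∃ (l₁ : List (Matrix (Fin n) (Fin n) F)) (d : Fin n → F)
    (l₃ : List (Matrix (Fin n) (Fin n) F)),
    (∀ A ∈ l₁, ∃ i j : Fin n, i ≠ j ∧ A = Pswap i j) ∧ (∀ t, d t ≠ 0) ∧
    (∀ A ∈ l₃, ∃ (i j : Fin n) (c : F), i ≠ j ∧ c ≠ 0 ∧ A = Eadd i j c) ∧
    l₁.length + (Function.mulSupport d).ncard + l₃.length ≤ k ∧
    M = l₁.prod * diagonal d * l₃.prod

namespace HasCanonicalFactorization

variable {M : Matrix (Fin n) (Fin n) F} {k : ℕ}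

theorem one : HasCanonicalFactorization (1 : Matrix (Fin n) (Fin n) F) 0 :=
  ⟨[], 1, [], by simp, fun _ => one_ne_zero, by simp, by simp, by simp⟩

theorem Pswap_mul (h : HasCanonicalFactorization M k) {i j : Fin n} (hij : i ≠ j) :
    HasCanonicalFactorization (Pswap i j * M) (k + 1) := by
  obtain ⟨l₁, d, l₃, h₁, hd, h₃, hlen, rfl⟩ := h
  refine ⟨Pswap i j :: l₁, d, l₃, ?_, hd, h₃, ?_, ?_⟩
  · exact List.forall_mem_cons.2 ⟨⟨i, j, hij, rfl⟩, h₁⟩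
  · simp only [List.length_cons]
    omega
  · simp only [List.prod_cons, mul_assoc]

theorem Escale_mul (h : HasCanonicalFactorization M k) (i : Fin n) {c : F} (hc : c ≠ 0) :
    HasCanonicalFactorization (Escale i c * M) (k + 1) := by
  obtain ⟨l₁, d, l₃, h₁, hd, h₃, hlen, rfl⟩ := h
  obtain ⟨σ, hσ⟩ := exists_prod_eq_permMatrix l₁ h₁
  refine ⟨l₁, Pi.mulSingle (σ i) c * d, l₃, h₁, ?_, h₃, ?_, ?_⟩
  · intro t
    by_cases ht : t = σ i <;> simp [ht, hc, hd]
  · have hsupp : Function.mulSupport (Pi.mulSingle (σ i) c * d) ⊆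
        insert (σ i) (Function.mulSupport d) := by
      rw [← Set.singleton_union]
      exact (Function.mulSupport_mul _ _).trans
        (Set.union_subset_union_left _ Pi.mulSupport_mulSingle_subset)
    have := (Set.ncard_le_ncard hsupp).trans (Set.ncard_insert_le _ _)
    omega
  · rw [hσ, ← mul_assoc, ← mul_assoc, Escale_mul_permMatrix, mul_assoc _ (Escale _ _),
      Escale_eq_diagonal_mulSingle, diagonal_mul_diagonal]
    rfl

theorem Eadd_mul (h : HasCanonicalFactorization M k) {i j : Fin n} (hij : i ≠ j) {c : F}
    (hc : c ≠ 0) : HasCanonicalFactorization (Eadd i j c * M) (k + 1) := by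
  obtain ⟨l₁, d, l₃, h₁, hd, h₃, hlen, rfl⟩ := h
  obtain ⟨σ, hσ⟩ := exists_prod_eq_permMatrix l₁ h₁
  set c' := c * d (σ i) / d (σ j)
  refine ⟨l₁, d, Eadd (σ i) (σ j) c' :: l₃, h₁, hd, ?_, ?_, ?_⟩
  · have hc' : c' ≠ 0 := div_ne_zero (mul_ne_zero hc (hd _)) (hd _)
    exact List.forall_mem_cons.2 ⟨⟨σ i, σ j, c', σ.injective.ne hij, hc', rfl⟩, h₃⟩
  · simp only [List.length_cons]
    omega
  · rw [hσ, List.prod_cons, ← mul_assoc, ← mul_assoc, Eadd_mul_permMatrix,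
      mul_assoc _ (Eadd _ _ _), Eadd_mul_diagonal _ _ _ (hd _)]
    simp only [mul_assoc, c']

end HasCanonicalFactorization

theorem hasCanonicalFactorization_prod (l : List (Matrix (Fin n) (Fin n) F))
    (hl : ∀ A ∈ l, IsElementary A) : HasCanonicalFactorization l.prod l.length := by
  induction l with
  | nil => exact .one
  | cons A l ih =>
    have h := ih fun B hB => hl B (List.mem_cons_of_mem _ hB)
    rw [List.prod_cons, List.length_cons]
    rcases hl A List.mem_cons_self with ⟨i, j, hij, rfl⟩ | ⟨i, c, hc, rfl⟩ |
      ⟨i, j, c, hij, hc, rfl⟩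
    · exact h.Pswap_mul hij
    · exact h.Escale_mul i hc
    · exact h.Eadd_mul hij hc

end

/-- Every product of elementary matrices equals a product, of no greater length, in
which first come transposition matrices, then row scalings with strictly increasing
indices, and then transvections. -/
theorem exists_canonical_product {F : Type*} [Field F] {n : ℕ}
    (l : List (Matrix (Fin n) (Fin n) F)) (hl : ∀ A ∈ l, IsElementary A) :
    ∃ (l₁ l₂ l₃ : List (Matrix (Fin n) (Fin n) F)),
      (∀ A ∈ l₁, ∃ i j : Fin n, i ≠ j ∧ A = Pswap i j) ∧
      (∃ (m : ℕ) (idx : Fin m → Fin n) (c : Fin m → F),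
        StrictMono idx ∧ (∀ t, c t ≠ 0) ∧
        l₂ = List.ofFn (fun t => Escale (idx t) (c t))) ∧
      (∀ A ∈ l₃, ∃ (i j : Fin n) (c : F), i ≠ j ∧ c ≠ 0 ∧ A = Eadd i j c) ∧
      l₁.length + l₂.length + l₃.length ≤ l.length ∧
      (l₁ ++ l₂ ++ l₃).prod = l.prod := by
  obtain ⟨l₁, d, l₃, h₁, hd, h₃, hlen, hprod⟩ := hasCanonicalFactorization_prod l hl
  obtain ⟨m, idx, c, hidx, hc, hm, hdiag⟩ := exists_strictMono_ofFn_Escale_prod_eq_diagonal hd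
  refine ⟨l₁, List.ofFn fun t => Escale (idx t) (c t), l₃, h₁, ⟨m, idx, c, hidx, hc, rfl⟩, h₃,
    ?_, ?_⟩
  · rw [List.length_ofFn]
    omega
  · rw [List.prod_append, List.prod_append, hdiag, hprod]
end
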